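/- Let V = ℂ^{n|n} be the standard p(n)-module and ε : V⊗V → V⊗V the map ε(e_a ⊗ e_b) = δ_{a,\bar b} Σ_{i∈I}(−1)^{|e_i|} e_i ⊗ e_{\bar i}. Then the image ε(V ⊗ V) is a trivial p(n)-submodule of V ⊗ V; i.e., x · ε(u) = 0 for every x ∈ p(n) and u ∈ V ⊗ V. -/
import Mathlib


open Sum Matrix

/-! `V = ℂ^{n|n}` with basis indexed by `Idx n = Fin n ⊕ Fin n`
(`Sum.inl` = even indices, `Sum.inr` = odd); `gl(n|n)` is realized as
`Matrix (Idx n) (Idx n) ℂ`, and `V ⊗ V` as coordinate functions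
`Idx n × Idx n → ℂ`. -/

abbrev Idx (n : ℕ) := Fin n ⊕ Fin n

/-- The bar involution `i ↦ ī`. -/
def bar {n : ℕ} : Idx n → Idx n := Sum.swap

/-- Parity: `false` (even) on `1,…,n`, `true` (odd) on `1̄,…,n̄`. -/
def pIdx {n : ℕ} : Idx n → Bool := Sum.elim (fun _ => false) (fun _ => true)

/-- The sign `(−1)^{|e_i|}`. -/
def sgn {n : ℕ} (i : Idx n) : ℂ := if pIdx i then -1 else 1

/-- `V ⊗ V` in coordinates. -/
abbrev VV (n : ℕ) := Idx n × Idx n → ℂ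

/-- `ε(e_a ⊗ e_b) = δ_{a,b̄} ∑_{i∈I} (−1)^{|e_i|} e_i ⊗ e_{ī}`. -/
noncomputable def epsOp (n : ℕ) : VV n →ₗ[ℂ] VV n :=
  LinearMap.pi fun p =>
    (if p.2 = bar p.1 then sgn p.1 else 0) • ∑ a : Idx n, LinearMap.proj (a, bar a)

/-- The basis vector `e_k` of `V`. -/
noncomputable def stdVec {n : ℕ} (k : Idx n) : Idx n → ℂ := Pi.single k 1

/-- The column `X e_k` of a matrix `X ∈ gl(n|n)`. -/
def colVec {n : ℕ} (X : Matrix (Idx n) (Idx n) ℂ) (k : Idx n) : Idx n → ℂ :=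
  fun a => X a k

/-- The pure tensor `u ⊗ v ∈ V ⊗ V` in coordinates. -/
def tens {n : ℕ} (u v : Idx n → ℂ) : VV n := fun p => u p.1 * v p.2

/-- Membership in the periplectic Lie superalgebra
`p(n) = {[[A,U],[L,−Aᵗ]] : U symmetric, L skew-symmetric} ⊂ gl(n|n)`. -/
def IsPn {n : ℕ} (X : Matrix (Idx n) (Idx n) ℂ) : Prop :=
  (∀ s t, X (inr s) (inr t) = -X (inl t) (inl s)) ∧
  (∀ s t, X (inl s) (inr t) = X (inl t) (inr s)) ∧
  (∀ s t, X (inr s) (inl t) = -X (inr t) (inl s))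

/-- `X` is homogeneous of parity `px` (`false` = even, `true` = odd). -/
def IsHomog {n : ℕ} (X : Matrix (Idx n) (Idx n) ℂ) (px : Bool) : Prop :=
  ∀ a b, X a b ≠ 0 → Bool.xor (pIdx a) (pIdx b) = px

/-- The sign `(−1)^{|x||e_a|}` for `x` of parity `px`. -/
def hSign {n : ℕ} (px : Bool) (a : Idx n) : ℂ := if px && pIdx a then -1 else 1

/-- The action of a homogeneous `x ∈ gl(n|n)` of parity `px` on `V ⊗ V` via the
super coproduct: `x(e_a ⊗ e_b) = xe_a ⊗ e_b + (−1)^{|x||e_a|} e_a ⊗ xe_b`. -/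
noncomputable def rho2 {n : ℕ} (X : Matrix (Idx n) (Idx n) ℂ) (px : Bool) :
    VV n →ₗ[ℂ] VV n :=
  LinearMap.pi fun p =>
    (∑ a : Idx n, X p.1 a • LinearMap.proj (a, p.2)) +
      hSign px p.1 • ∑ b : Idx n, X p.2 b • LinearMap.proj (p.1, b)


lemma bar_bar {n : ℕ} (a : Idx n) : bar (bar a) = a := Sum.swap_swap a

lemma key_identity {n : ℕ} (X : Matrix (Idx n) (Idx n) ℂ) (px : Bool)
    (hX : IsPn X) (hhom : IsHomog X px) (i j : Idx n) :
    X i (bar j) * sgn (bar j) + hSign px i * (X j (bar i) * sgn i) = 0 := by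
  obtain ⟨h1, h2, h3⟩ := hX
  have hz : ∀ a b, Bool.xor (pIdx a) (pIdx b) ≠ px → X a b = 0 := by
    intro a b h
    by_contra hc
    exact h (hhom a b hc)
  cases i with
  | inl s =>
    cases j with
    | inl t =>
      simp only [bar, Sum.swap_inl, sgn, pIdx, Sum.elim_inr, Sum.elim_inl,
        hSign, Bool.and_false, if_true, if_false, Bool.false_eq_true]
      rw [h2 s t]; ring
    | inr t =>
      simp only [bar, Sum.swap_inr, Sum.swap_inl, sgn, pIdx, Sum.elim_inr,
        Sum.elim_inl, hSign, Bool.and_false, Bool.false_eq_true, if_false]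
      rw [h1 t s]; ring
  | inr s =>
    cases j with
    | inl t =>
      have e1 : X (inr s) (inr t) = - X (inl t) (inl s) := h1 s t
      cases px with
      | false =>
        simp only [bar, Sum.swap_inl, Sum.swap_inr, sgn, pIdx, Sum.elim_inr,
          Sum.elim_inl, hSign, Bool.false_and, Bool.false_eq_true, if_false,
          if_true]
        rw [e1]; ring
      | true =>
        have e2 : X (inl t) (inl s) = 0 := hz _ _ (by simp [pIdx])
        simp only [bar, Sum.swap_inl, Sum.swap_inr, sgn, pIdx, Sum.elim_inr,
          Sum.elim_inl, hSign]
        rw [e1, e2]; ring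
    | inr t =>
      cases px with
      | false =>
        have e1 : X (inr s) (inl t) = 0 := hz _ _ (by simp [pIdx])
        have e2 : X (inr t) (inl s) = 0 := hz _ _ (by simp [pIdx])
        simp only [bar, Sum.swap_inr, sgn, pIdx, Sum.elim_inr, Sum.elim_inl,
          hSign]
        rw [e1, e2]; ring
      | true =>
        have e1 : X (inr t) (inl s) = - X (inr s) (inl t) := h3 t s
        simp only [bar, Sum.swap_inr, sgn, pIdx, Sum.elim_inr, Sum.elim_inl,
          hSign]
        rw [e1]; norm_num

/-- the image of `ε` is a trivial `p(n)`-submodule of `V ⊗ V`: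
`x · ε(u) = 0` for every homogeneous `x ∈ p(n)` and every `u ∈ V ⊗ V`. -/
theorem pn_acts_trivially_on_eps_image {n : ℕ}
    (X : Matrix (Idx n) (Idx n) ℂ) (px : Bool)
    (hX : IsPn X) (hhom : IsHomog X px) :
    (rho2 X px) ∘ₗ (epsOp n) = 0 := by
  apply LinearMap.ext
  intro u
  rw [LinearMap.comp_apply, LinearMap.zero_apply]
  funext p
  have heps : ∀ q : Idx n × Idx n, epsOp n u q =
      (if q.2 = bar q.1 then sgn q.1 else 0) * ∑ a : Idx n, u (a, bar a) := by
    intro q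
    simp only [epsOp, LinearMap.pi_apply, LinearMap.smul_apply,
      LinearMap.sum_apply, LinearMap.proj_apply, smul_eq_mul]
  obtain ⟨i, j⟩ := p
  have hr : rho2 X px (epsOp n u) (i, j) =
      (∑ a : Idx n, X i a * epsOp n u (a, j)) +
        hSign px i * ∑ b : Idx n, X j b * epsOp n u (i, b) := by
    simp only [rho2, LinearMap.pi_apply, LinearMap.add_apply,
      LinearMap.sum_apply, LinearMap.smul_apply, LinearMap.proj_apply,
      smul_eq_mul]
  rw [hr]
  have c1 : (∑ a : Idx n, X i a * epsOp n u (a, j)) =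
      X i (bar j) * sgn (bar j) * ∑ a : Idx n, u (a, bar a) := by
    rw [Finset.sum_eq_single (bar j)]
    · rw [heps]
      simp [bar_bar, mul_assoc]
    · intro a _ ha
      rw [heps]
      have : ¬ j = bar a := by
        intro h
        exact ha (by rw [h, bar_bar])
      simp [this]
    · simp
  have c2 : (∑ b : Idx n, X j b * epsOp n u (i, b)) =
      X j (bar i) * sgn i * ∑ a : Idx n, u (a, bar a) := by
    rw [Finset.sum_eq_single (bar i)]
    · rw [heps]
      simp [mul_assoc]
    · intro b _ hb
      rw [heps]
      simp [hb]
    · simp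
  rw [c1, c2]
  have := key_identity X px hX hhom i j
  show _ = (0 : ℂ)
  calc X i (bar j) * sgn (bar j) * (∑ a : Idx n, u (a, bar a)) +
        hSign px i * (X j (bar i) * sgn i * ∑ a : Idx n, u (a, bar a))
      = (X i (bar j) * sgn (bar j) + hSign px i * (X j (bar i) * sgn i)) *
          ∑ a : Idx n, u (a, bar a) := by ring
    _ = 0 := by rw [this]; ring
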